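/- Let ρ be a d×d density matrix, let G be a CPTNI map from d×d to d'×d' complex matrices with d' ≥ 2, let Z be a pinching channel on d'×d' complex matrices, and let ε satisfy 0 < ε ≤ 1/(e·(d'−1)), where e is the base of the natural logarithm. Define f(ρ) = H(Z(G(ρ))) − H(G(ρ)), G_ε(ρ) = (1−ε)·G(ρ) + (ε/d')·I_{d'}, f_ε(ρ) = H(Z(G_ε(ρ))) − H(G_ε(ρ)), and ζ_ε = 2ε(d'−1)·log(d'/(ε(d'−1))). Then |f(ρ) − f_ε(ρ)| ≤ ζ_ε. -/

import Mathlib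

/-!
Both `G(ρ)` and its pinching `Z(G(ρ))` are positive semidefinite of trace at most one, and `Z`
commutes with the depolarisation `τ ↦ (1 - ε) τ + (ε / d') I` because `Z(I) = I`. So it suffices
to show `|H((1 - ε) τ + (ε / d') I) - H(τ)| ≤ ζ_ε / 2` for every such `τ`. The eigenvalues
`(1 - ε) x_i + ε / d'` of the depolarised matrix differ from the eigenvalues `x_i` of `τ` by
`ε ∑ |x_i - 1 / d'| ≤ ε (d' - 1)` in total. With `η(t) = -t log t`, the bound
`|η u - η v| ≤ η |u - v|` for `|u - v| ≤ 1 / e`, Jensen's inequality for the concave `η`, and the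
monotonicity of `η` on `[0, 1 / e]` turn this into `ε (d' - 1) log (d' / (ε (d' - 1)))`.
-/

open scoped BigOperators ComplexOrder Matrix

/-- The von Neumann entropy `H(σ) = −Σ λ_i log λ_i` of a Hermitian matrix
(`0` for non-Hermitian matrices; `log` is the natural logarithm, `0 log 0 = 0`). -/
noncomputable def vnEntropy {d : ℕ} (A : Matrix (Fin d) (Fin d) ℂ) : ℝ :=
  if hA : A.IsHermitian then -∑ i, hA.eigenvalues i * Real.log (hA.eigenvalues i) else 0

namespace Real

lemma monotoneOn_negMulLog : MonotoneOn negMulLog (Set.Icc 0 (exp (-1))) := by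
  refine monotoneOn_of_deriv_nonneg (convex_Icc _ _) continuous_negMulLog.continuousOn
    (differentiableOn_negMulLog.mono fun x hx => ?_) fun x hx => ?_
  · rw [interior_Icc] at hx
    exact hx.1.ne'
  · rw [interior_Icc] at hx
    have : log x < -1 := by simpa using log_lt_log hx.1 hx.2
    rw [deriv_negMulLog hx.1.ne']
    linarith

lemma self_le_negMulLog {t : ℝ} (ht0 : 0 ≤ t) (ht : t ≤ exp (-1)) : t ≤ negMulLog t := by
  rcases ht0.eq_or_lt with rfl | ht0
  · simp
  have : log t ≤ -1 := by simpa using log_le_log ht0 ht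
  rw [negMulLog]
  nlinarith

lemma negMulLog_add_le {u t : ℝ} (hu : 0 ≤ u) (ht : 0 ≤ t) :
    negMulLog (u + t) ≤ negMulLog u + negMulLog t := by
  have hlog : ∀ a, 0 ≤ a → a ≤ u + t → a * log a ≤ a * log (u + t) := by
    intro a ha hle
    rcases ha.eq_or_lt with rfl | ha
    · simp
    · exact mul_le_mul_of_nonneg_left (log_le_log ha hle) ha.le
  simp only [negMulLog]
  nlinarith [hlog u hu (by linarith), hlog t ht (by linarith)]

lemma negMulLog_sub_negMulLog_add_le {u t : ℝ} (hu : 0 ≤ u) (ht : 0 ≤ t) (hut : u + t ≤ 1) :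
    negMulLog u - negMulLog (u + t) ≤ t := by
  rcases hu.eq_or_lt with rfl | hu
  · simp only [zero_add, negMulLog_zero, zero_sub] at hut ⊢
    linarith [negMulLog_nonneg ht hut]
  have hlog : u * (log (u + t) - log u) ≤ t := by
    have := log_le_sub_one_of_pos (x := (u + t) / u) (by positivity)
    rw [log_div (by positivity) hu.ne'] at this
    calc u * (log (u + t) - log u) ≤ u * ((u + t) / u - 1) := by gcongr
      _ = t := by field_simp; ring
  have : t * log (u + t) ≤ 0 := mul_nonpos_of_nonneg_of_nonpos ht (log_nonpos (by positivity) hut)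
  simp only [negMulLog]
  nlinarith

lemma abs_negMulLog_sub_negMulLog_le {u v : ℝ} (hu0 : 0 ≤ u) (hv0 : 0 ≤ v) (hu1 : u ≤ 1)
    (hv1 : v ≤ 1) (huv : |u - v| ≤ exp (-1)) :
    |negMulLog u - negMulLog v| ≤ negMulLog |u - v| := by
  wlog hle : u ≤ v generalizing u v
  · rw [abs_sub_comm, abs_sub_comm u]
    exact this hv0 hu0 hv1 hu1 (by rwa [abs_sub_comm]) (by linarith)
  obtain ⟨t, ht, rfl⟩ : ∃ t, 0 ≤ t ∧ v = u + t := ⟨v - u, by linarith, by ring⟩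
  have habs : |u - (u + t)| = t := by rw [sub_add_cancel_left, abs_neg, abs_of_nonneg ht]
  rw [habs] at huv ⊢
  rw [abs_le]
  constructor
  · linarith [negMulLog_add_le hu0 ht]
  · linarith [negMulLog_sub_negMulLog_add_le hu0 ht hv1, self_le_negMulLog ht huv]

lemma sum_negMulLog_le_card_mul {ι : Type*} [Fintype ι] [Nonempty ι] {δ : ι → ℝ}
    (hδ : ∀ i, 0 ≤ δ i) :
    ∑ i, negMulLog (δ i) ≤ Fintype.card ι * negMulLog ((∑ i, δ i) / Fintype.card ι) := by
  set n : ℝ := (Fintype.card ι : ℝ)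
  have hn : 0 < n := Nat.cast_pos.mpr Fintype.card_pos
  have hjensen := concaveOn_negMulLog.le_map_sum (t := Finset.univ) (w := fun _ => n⁻¹) (p := δ)
    (fun _ _ => by positivity) (by simp [n, hn.ne']) (fun i _ => hδ i)
  simp only [smul_eq_mul, ← Finset.mul_sum] at hjensen
  calc ∑ i, negMulLog (δ i) = n * (n⁻¹ * ∑ i, negMulLog (δ i)) := by field_simp
    _ ≤ n * negMulLog ((∑ i, δ i) / n) := by
      rw [div_eq_inv_mul]
      gcongr

theorem abs_sum_negMulLog_sub_le {ι : Type*} [Fintype ι] [Nonempty ι] {x y : ι → ℝ}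
    (hx0 : ∀ i, 0 ≤ x i) (hx1 : ∀ i, x i ≤ 1) (hy0 : ∀ i, 0 ≤ y i) (hy1 : ∀ i, y i ≤ 1)
    {a : ℝ} (ha : a ≤ exp (-1)) (hxy : ∑ i, |x i - y i| ≤ a) :
    |∑ i, negMulLog (x i) - ∑ i, negMulLog (y i)| ≤ a * log (Fintype.card ι / a) := by
  set n : ℝ := (Fintype.card ι : ℝ)
  have hn : 1 ≤ n := Nat.one_le_cast.mpr Fintype.card_pos
  have hsum0 : 0 ≤ ∑ i, |x i - y i| := Finset.sum_nonneg fun i _ => abs_nonneg _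
  have ha0 : 0 ≤ a := hsum0.trans hxy
  have hδ : ∀ i, |x i - y i| ≤ exp (-1) := fun i =>
    (Finset.single_le_sum (fun j _ => abs_nonneg (x j - y j)) (Finset.mem_univ i)).trans
      (hxy.trans ha)
  have hmean : (∑ i, |x i - y i|) / n ≤ a / n := by gcongr
  have han : a / n ≤ exp (-1) := (div_le_self ha0 hn).trans ha
  calc |∑ i, negMulLog (x i) - ∑ i, negMulLog (y i)|
      ≤ ∑ i, |negMulLog (x i) - negMulLog (y i)| := by
        rw [← Finset.sum_sub_distrib]
        exact Finset.abs_sum_le_sum_abs _ _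
    _ ≤ ∑ i, negMulLog |x i - y i| := Finset.sum_le_sum fun i _ =>
        abs_negMulLog_sub_negMulLog_le (hx0 i) (hy0 i) (hx1 i) (hy1 i) (hδ i)
    _ ≤ n * negMulLog ((∑ i, |x i - y i|) / n) :=
        sum_negMulLog_le_card_mul fun i => abs_nonneg _
    _ ≤ n * negMulLog (a / n) := by
        gcongr
        exact monotoneOn_negMulLog ⟨by positivity, hmean.trans han⟩ ⟨by positivity, han⟩ hmean
    _ = a * log (n / a) := by
        rw [negMulLog, ← inv_div, log_inv]
        field_simp

lemma sum_abs_sub_inv_card_le {ι : Type*} [Fintype ι] (hcard : 2 ≤ Fintype.card ι) {x : ι → ℝ}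
    (hx0 : ∀ i, 0 ≤ x i) (hx1 : ∑ i, x i ≤ 1) :
    ∑ i, |x i - (Fintype.card ι : ℝ)⁻¹| ≤ 2 * (1 - (Fintype.card ι : ℝ)⁻¹) := by
  set c : ℝ := (Fintype.card ι : ℝ)⁻¹
  have hc0 : 0 ≤ c := by positivity
  have hc2 : 2 * c ≤ 1 := by
    rw [← div_eq_mul_inv, div_le_one (by positivity)]
    exact_mod_cast hcard
  have habs : ∀ i, |x i - c| = x i + c - 2 * min (x i) c := fun i => by
    rcases le_total (x i) c with h | h
    · rw [abs_of_nonpos (by linarith), min_eq_left h]; ring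
    · rw [abs_of_nonneg (by linarith), min_eq_right h]; ring
  have hmin : min (∑ i, x i) c ≤ ∑ i, min (x i) c := by
    by_cases hex : ∃ j, c ≤ x j
    · obtain ⟨j, hj⟩ := hex
      calc min (∑ i, x i) c ≤ min (x j) c := by rw [min_eq_right hj]; exact min_le_right _ _
        _ ≤ ∑ i, min (x i) c :=
          Finset.single_le_sum (fun i _ => le_min (hx0 i) hc0) (Finset.mem_univ j)
    · simp only [not_exists, not_le] at hex
      rw [Finset.sum_congr rfl fun i _ => min_eq_left (hex i).le]
      exact min_le_left _ _
  have hcsum : ∑ _i : ι, c = 1 := by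
    rw [Finset.sum_const, Finset.card_univ, nsmul_eq_mul, mul_inv_cancel₀ (by positivity)]
  rw [Finset.sum_congr rfl fun i _ => habs i, Finset.sum_sub_distrib, Finset.sum_add_distrib,
    hcsum, ← Finset.mul_sum]
  have hx : 0 ≤ ∑ i, x i := Finset.sum_nonneg fun i _ => hx0 i
  rcases min_cases (∑ i, x i) c with ⟨h, -⟩ | ⟨h, -⟩ <;> linarith

lemma abs_sum_negMulLog_depolarize_sub_le {ι : Type*} [Fintype ι] (hcard : 2 ≤ Fintype.card ι)
    {x : ι → ℝ} (hx0 : ∀ i, 0 ≤ x i) (hx1 : ∑ i, x i ≤ 1) {ε : ℝ} (hε0 : 0 ≤ ε)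
    (hε : ε * ((Fintype.card ι : ℝ) - 1) ≤ exp (-1)) :
    |∑ i, negMulLog ((1 - ε) * x i + ε / Fintype.card ι) - ∑ i, negMulLog (x i)| ≤
      ε * ((Fintype.card ι : ℝ) - 1) *
        log (Fintype.card ι / (ε * ((Fintype.card ι : ℝ) - 1))) := by
  set n : ℝ := (Fintype.card ι : ℝ)
  have hn : 2 ≤ n := Nat.ofNat_le_cast.mpr hcard
  have : Nonempty ι := Fintype.card_pos_iff.mp (by omega)
  have hε1 : ε ≤ 1 := by
    nlinarith [exp_le_one_iff.mpr (show (-1 : ℝ) ≤ 0 by norm_num)]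
  have hxi : ∀ i, x i ≤ 1 := fun i =>
    (Finset.single_le_sum (fun j _ => hx0 j) (Finset.mem_univ i)).trans hx1
  have hdiff : ∀ i, |((1 - ε) * x i + ε / n) - x i| = ε * |x i - n⁻¹| := fun i => by
    rw [← abs_of_nonneg hε0, ← abs_mul, abs_of_nonneg hε0, ← abs_neg]
    congr 1
    field_simp
    ring
  have hTV := sum_abs_sub_inv_card_le hcard hx0 hx1
  refine abs_sum_negMulLog_sub_le (fun i => ?_) (fun i => ?_) hx0 hxi hε ?_
  · have : 0 ≤ ε / n := by positivity
    nlinarith [hx0 i]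
  · have : ε / n ≤ ε := div_le_self hε0 (by linarith)
    nlinarith [hx0 i, hxi i]
  · rw [Finset.sum_congr rfl fun i _ => hdiff i, ← Finset.mul_sum]
    have : 2 * (1 - n⁻¹) ≤ n - 1 := by
      have : 0 < n := by linarith
      field_simp
      nlinarith
    gcongr
    exact hTV.trans this

end Real

namespace Matrix.IsHermitian
variable {n 𝕜 : Type*} [Fintype n] [DecidableEq n] [RCLike 𝕜] {A : Matrix n n 𝕜}

open Polynomial in
lemma sum_comp_eigenvalues_of_charpoly_eq (hA : A.IsHermitian) {w : n → ℝ}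
    (h : A.charpoly = ∏ i, (X - C (w i : 𝕜))) (φ : ℝ → ℝ) :
    ∑ i, φ (hA.eigenvalues i) = ∑ i, φ (w i) := by
  have hroots : Finset.univ.val.map (RCLike.ofReal ∘ hA.eigenvalues) =
      Finset.univ.val.map (RCLike.ofReal ∘ w : n → 𝕜) := by
    rw [← hA.roots_charpoly_eq_eigenvalues, h, Polynomial.roots_prod _ _ (by
      simp [Finset.prod_ne_zero_iff, Polynomial.X_sub_C_ne_zero])]
    simp
  rw [← Multiset.map_map, ← Multiset.map_map] at hroots
  have := congrArg (fun s => (s.map φ).sum) (Multiset.map_injective RCLike.ofReal_injective hroots)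
  simp only [Multiset.map_map] at this
  exact this

lemma cfc_affine (hA : A.IsHermitian) (c b : ℝ) :
    cfc (fun x => c * x + b) A = c • A + b • (1 : Matrix n n 𝕜) := by
  rw [cfc_add .., cfc_const_mul .., cfc_id' .., cfc_const .., Algebra.algebraMap_eq_smul_one]

lemma sum_comp_eigenvalues_affine (hA : A.IsHermitian) (c b : ℝ)
    (hB : (c • A + b • (1 : Matrix n n 𝕜)).IsHermitian) (φ : ℝ → ℝ) :
    ∑ i, φ (hB.eigenvalues i) = ∑ i, φ (c * hA.eigenvalues i + b) := by
  refine hB.sum_comp_eigenvalues_of_charpoly_eq ?_ φ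
  rw [← hA.cfc_affine, hA.charpoly_cfc_eq]

end Matrix.IsHermitian

lemma vnEntropy_eq_sum_negMulLog {n : ℕ} {A : Matrix (Fin n) (Fin n) ℂ} (hA : A.IsHermitian) :
    vnEntropy A = ∑ i, Real.negMulLog (hA.eigenvalues i) := by
  simp [vnEntropy, hA, Real.negMulLog]

theorem abs_vnEntropy_depolarize_sub_le {n : ℕ} (hn : 2 ≤ n) {τ : Matrix (Fin n) (Fin n) ℂ}
    (hτ : τ.PosSemidef) (hτ1 : τ.trace ≤ 1) {ε : ℝ} (hε0 : 0 ≤ ε)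
    (hε : ε * ((n : ℝ) - 1) ≤ Real.exp (-1)) :
    |vnEntropy ((1 - ε) • τ + (ε / n) • (1 : Matrix (Fin n) (Fin n) ℂ)) - vnEntropy τ|
      ≤ ε * ((n : ℝ) - 1) * Real.log (n / (ε * ((n : ℝ) - 1))) := by
  have hB : ((1 - ε) • τ + (ε / n) • (1 : Matrix (Fin n) (Fin n) ℂ)).IsHermitian :=
    hτ.1.cfc_affine (1 - ε) (ε / n) ▸ cfc_predicate _ τ
  have hsum : ∑ i, hτ.1.eigenvalues i ≤ 1 := by
    rw [hτ.1.trace_eq_sum_eigenvalues, ← RCLike.ofReal_sum] at hτ1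
    exact Complex.real_le_real.mp (by simpa using hτ1)
  rw [vnEntropy_eq_sum_negMulLog hB, vnEntropy_eq_sum_negMulLog hτ.1,
    hτ.1.sum_comp_eigenvalues_affine _ _ hB]
  simpa using Real.abs_sum_negMulLog_depolarize_sub_le (by simpa using hn) hτ.eigenvalues_nonneg
    hsum hε0 (by simpa using hε)

namespace Matrix
variable {m n ι : Type*} [Fintype m] [Fintype n] [Fintype ι]

lemma posSemidef_sum_mul_mul_conjTranspose (K : ι → Matrix m n ℂ) {ρ : Matrix n n ℂ}
    (hρ : ρ.PosSemidef) : (∑ i, K i * ρ * (K i)ᴴ).PosSemidef :=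
  posSemidef_sum _ fun i _ => hρ.mul_mul_conjTranspose_same (K i)

variable [DecidableEq n]

open scoped MatrixOrder in
lemma PosSemidef.trace_mul_nonneg {A B : Matrix n n ℂ} (hA : A.PosSemidef) (hB : B.PosSemidef) :
    0 ≤ (A * B).trace := by
  obtain ⟨C, rfl⟩ := CStarAlgebra.nonneg_iff_eq_star_mul_self.mp hB.nonneg
  rw [← mul_assoc, trace_mul_comm, ← mul_assoc]
  exact (hA.mul_mul_conjTranspose_same C).trace_nonneg

lemma trace_sum_mul_mul_conjTranspose_le {K : ι → Matrix m n ℂ}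
    (hK : (1 - ∑ i, (K i)ᴴ * K i).PosSemidef) {ρ : Matrix n n ℂ} (hρ : ρ.PosSemidef) :
    (∑ i, K i * ρ * (K i)ᴴ).trace ≤ ρ.trace := by
  have hdefect :
      (∑ i, K i * ρ * (K i)ᴴ).trace = ρ.trace - ((1 - ∑ i, (K i)ᴴ * K i) * ρ).trace := by
    simp only [sub_mul, one_mul, Finset.sum_mul, trace_sub, trace_sum, trace_mul_cycle (K _)]
    ring
  rw [hdefect]
  exact sub_le_self _ (hK.trace_mul_nonneg hρ)

variable {P : ι → Matrix n n ℂ}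

lemma trace_sum_mul_mul_of_idempotent (hP : ∀ j, P j * P j = P j) (hP1 : ∑ j, P j = 1)
    (σ : Matrix n n ℂ) : (∑ j, P j * σ * P j).trace = σ.trace := by
  calc (∑ j, P j * σ * P j).trace = ∑ j, (P j * σ).trace := by
        rw [trace_sum]
        congr! 1 with j
        rw [trace_mul_cycle, hP]
    _ = σ.trace := by rw [← trace_sum, ← Finset.sum_mul, hP1, one_mul]

lemma sum_mul_smul_add_smul_one_mul (hP : ∀ j, P j * P j = P j) (hP1 : ∑ j, P j = 1)
    (σ : Matrix n n ℂ) (c b : ℝ) :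
    ∑ j, P j * (c • σ + b • 1) * P j = c • ∑ j, P j * σ * P j + b • 1 := by
  simp only [Matrix.mul_add, Matrix.add_mul, Matrix.mul_smul, Matrix.smul_mul, Matrix.mul_one, hP,
    Finset.sum_add_distrib, ← Finset.smul_sum, hP1]

end Matrix

theorem objective_continuity_in_epsilon_general
    {d d' m p : ℕ} (hd' : 2 ≤ d')
    (K : Fin m → Matrix (Fin d') (Fin d) ℂ)
    (hK : ((1 : Matrix (Fin d) (Fin d) ℂ) - ∑ i, (K i)ᴴ * K i).PosSemidef)
    (G : Matrix (Fin d) (Fin d) ℂ → Matrix (Fin d') (Fin d') ℂ)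
    (hG : G = fun X => ∑ i, K i * X * (K i)ᴴ)
    (P : Fin p → Matrix (Fin d') (Fin d') ℂ)
    (hP1 : ∀ j, (P j)ᴴ = P j) (hP2 : ∀ j, P j * P j = P j)
    (hP4 : ∑ j, P j = 1)
    (Z : Matrix (Fin d') (Fin d') ℂ → Matrix (Fin d') (Fin d') ℂ)
    (hZ : Z = fun X => ∑ j, P j * X * P j)
    (ρ : Matrix (Fin d) (Fin d) ℂ) (hρ : ρ.PosSemidef) (hρ1 : ρ.trace = 1)
    (ε : ℝ) (hε0 : 0 < ε) (hεe : ε ≤ 1 / (Real.exp 1 * ((d' : ℝ) - 1)))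
    (f fε : Matrix (Fin d) (Fin d) ℂ → ℝ)
    (hf : f = fun X => vnEntropy (Z (G X)) - vnEntropy (G X))
    (Gε : Matrix (Fin d) (Fin d) ℂ → Matrix (Fin d') (Fin d') ℂ)
    (hGε : Gε = fun X => (1 - ε) • G X + (ε / d') • (1 : Matrix (Fin d') (Fin d') ℂ))
    (hfε : fε = fun X => vnEntropy (Z (Gε X)) - vnEntropy (Gε X))
    (ζ : ℝ) (hζ : ζ = 2 * ε * ((d' : ℝ) - 1) * Real.log ((d' : ℝ) / (ε * ((d' : ℝ) - 1)))) :
    |f ρ - fε ρ| ≤ ζ := by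
  subst hf hfε hGε hG hZ hζ
  set σ := ∑ i, K i * ρ * (K i)ᴴ
  have hσ : σ.PosSemidef := Matrix.posSemidef_sum_mul_mul_conjTranspose K hρ
  have hσ1 : σ.trace ≤ 1 := hρ1 ▸ Matrix.trace_sum_mul_mul_conjTranspose_le hK hρ
  have hZσ : (∑ j, P j * σ * P j).PosSemidef := by
    simpa only [hP1] using Matrix.posSemidef_sum_mul_mul_conjTranspose P hσ
  have hZσ1 : (∑ j, P j * σ * P j).trace ≤ 1 :=
    (Matrix.trace_sum_mul_mul_of_idempotent hP2 hP4 σ).trans_le hσ1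
  have hε : ε * ((d' : ℝ) - 1) ≤ Real.exp (-1) := by
    have hd'1 : (0 : ℝ) < d' - 1 := by
      have : (2 : ℝ) ≤ d' := Nat.ofNat_le_cast.mpr hd'
      linarith
    calc ε * ((d' : ℝ) - 1) ≤ 1 / (Real.exp 1 * ((d' : ℝ) - 1)) * ((d' : ℝ) - 1) := by gcongr
      _ = Real.exp (-1) := by
        rw [Real.exp_neg]
        field_simp
  have hZ := abs_vnEntropy_depolarize_sub_le hd' hZσ hZσ1 hε0.le hε
  have hG := abs_vnEntropy_depolarize_sub_le hd' hσ hσ1 hε0.le hε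
  simp only [Matrix.sum_mul_smul_add_smul_one_mul hP2 hP4]
  rw [abs_le] at hZ hG ⊢
  constructor <;> linarith [hZ.1, hZ.2, hG.1, hG.2]

/-- Continuity of the objective in the perturbation parameter: for a
density matrix `ρ`, a CPTNI map `G` into dimension `d' ≥ 2`, a pinching channel
`Z`, and `0 < ε ≤ 1/(e (d'−1))`, with `f(ρ) = H(Z(G(ρ))) − H(G(ρ))`,
`G_ε(ρ) = (1−ε) G(ρ) + (ε/d') I`, `f_ε(ρ) = H(Z(G_ε(ρ))) − H(G_ε(ρ))`, and
`ζ_ε = 2 ε (d'−1) log(d'/(ε(d'−1)))`, one has `|f(ρ) − f_ε(ρ)| ≤ ζ_ε`. -/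
theorem objective_continuity_in_epsilon
    {d d' m p : ℕ} (hd' : 2 ≤ d')
    (K : Fin m → Matrix (Fin d') (Fin d) ℂ)
    (hK : ((1 : Matrix (Fin d) (Fin d) ℂ) - ∑ i, (K i)ᴴ * K i).PosSemidef)
    (G : Matrix (Fin d) (Fin d) ℂ → Matrix (Fin d') (Fin d') ℂ)
    (hG : G = fun X => ∑ i, K i * X * (K i)ᴴ)
    (P : Fin p → Matrix (Fin d') (Fin d') ℂ)
    (hP1 : ∀ j, (P j)ᴴ = P j) (hP2 : ∀ j, P j * P j = P j)
    (hP3 : ∀ j k, j ≠ k → P j * P k = 0)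
    (hP4 : ∑ j, P j = 1)
    (Z : Matrix (Fin d') (Fin d') ℂ → Matrix (Fin d') (Fin d') ℂ)
    (hZ : Z = fun X => ∑ j, P j * X * P j)
    (ρ : Matrix (Fin d) (Fin d) ℂ) (hρ : ρ.PosSemidef) (hρ1 : ρ.trace = 1)
    (ε : ℝ) (hε0 : 0 < ε) (hεe : ε ≤ 1 / (Real.exp 1 * ((d' : ℝ) - 1)))
    (f fε : Matrix (Fin d) (Fin d) ℂ → ℝ)
    (hf : f = fun X => vnEntropy (Z (G X)) - vnEntropy (G X))
    (Gε : Matrix (Fin d) (Fin d) ℂ → Matrix (Fin d') (Fin d') ℂ)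
    (hGε : Gε = fun X => (1 - ε) • G X + (ε / d') • (1 : Matrix (Fin d') (Fin d') ℂ))
    (hfε : fε = fun X => vnEntropy (Z (Gε X)) - vnEntropy (Gε X))
    (ζ : ℝ) (hζ : ζ = 2 * ε * ((d' : ℝ) - 1) * Real.log ((d' : ℝ) / (ε * ((d' : ℝ) - 1)))) :
    |f ρ - fε ρ| ≤ ζ :=
  objective_continuity_in_epsilon_general hd' K hK G hG P hP1 hP2 hP4 Z hZ ρ hρ hρ1 ε hε0 hεe f fε
    hf Gε hGε hfε ζ hζ
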